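/- arXiv:1207.0530 — 3 statements merged into one kernel-verified Lean document; each statement's English description precedes it below -/
import Mathlib

section
/- (Lemma 3.4) Let H be a numerical semigroup of genus g and let s_1 > s_2 > ⋯ be its associated sequence. Then s_i ≤ 2g − 2i for 1 ≤ i ≤ g, and s_i = g − i − 1 for every i ≥ g + 1. -/
/-!
Let `T = {n - 1 : n ∈ ℤ ∖ H}`: it consists of all integers `≤ -2` together with the shifted
gaps `a - 1`, and `-1 ∉ T` because `0 ∈ H`. Since `s` enumerates `T` decreasingly, `s i` is
pinned down by `#{t ∈ T | s i ≤ t} = i`. If `s i < 0` this count is `g + (-1 - s i)`, so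
`s i = g - i - 1`, which forces `i > g`. If `s i ≥ 0` then `a = s i + 1` is a gap and `i` counts
the gaps `≥ a`, so `i ≤ g`; as `x ↦ a - x` sends the elements of `H` in `(0, a)` injectively to
gaps, at least `(a - 1) / 2` gaps lie below `a`, that is `s i = a - 1 ≤ 2 (g - i)`.
-/

open Set

theorem ncard_image_Ici_one_inter_Ici {α : Type*} [LinearOrder α] {s : ℕ → α}
    (hs : StrictAntiOn s (Ici 1)) {i : ℕ} (hi : 1 ≤ i) :
    (s '' Ici 1 ∩ Ici (s i)).ncard = i := by
  have himage : (s '' Ici 1 ∩ Ici (s i)) = s '' Icc 1 i := by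
    ext m
    constructor
    · rintro ⟨⟨j, hj, rfl⟩, hle⟩
      exact ⟨j, ⟨hj, (hs.le_iff_ge hi hj).1 hle⟩, rfl⟩
    · rintro ⟨j, ⟨hj, hji⟩, rfl⟩
      exact ⟨⟨j, hj, rfl⟩, (hs.le_iff_ge hi hj).2 hji⟩
  rw [himage, (hs.injOn.mono Icc_subset_Ici_self).ncard_image, ncard_Icc_nat]
  omega

theorem sub_one_le_two_mul_ncard_compl_inter_Iio {H : Set ℕ}
    (hadd : ∀ x ∈ H, ∀ y ∈ H, x + y ∈ H) {a : ℕ} (ha : a ∉ H) :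
    a - 1 ≤ 2 * (Hᶜ ∩ Iio a).ncard := by
  have hreflect : (Ioo 0 a ∩ H).ncard ≤ (Ioo 0 a ∩ Hᶜ).ncard := by
    refine ncard_le_ncard_of_injOn (a - ·) ?_ ?_ ((finite_Ioo 0 a).inter_of_left _)
    · rintro x ⟨⟨hx0, hxa⟩, hxH⟩
      refine ⟨⟨by omega, by omega⟩, fun hc => ha ?_⟩
      simpa [Nat.sub_add_cancel hxa.le] using hadd _ hc _ hxH
    · rintro x ⟨⟨-, hxa⟩, -⟩ y ⟨⟨-, hya⟩, -⟩ (hxy : a - x = a - y)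
      omega
  have hsplit := ncard_inter_add_ncard_sdiff_eq_ncard (Ioo 0 a) H
  have hsub : (Ioo 0 a ∩ Hᶜ).ncard ≤ (Hᶜ ∩ Iio a).ncard :=
    ncard_le_ncard (fun x ⟨⟨_, hxa⟩, hx⟩ => ⟨hx, hxa⟩) ((finite_Iio a).inter_of_right _)
  rw [Set.sdiff_eq, ncard_Ioo_nat] at hsplit
  omega

/-- The set `{n - 1 : n ∈ ℤ ∖ H}` enumerated by the associated sequence of `H`. -/
def associatedSet (H : Set ℕ) : Set ℤ := {m | ∀ n ∈ H, (n : ℤ) ≠ m + 1}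

section associatedSet

variable {H : Set ℕ}

theorem natCast_sub_one_mem_associatedSet {n : ℕ} :
    (n : ℤ) - 1 ∈ associatedSet H ↔ n ∉ H := by
  refine ⟨fun h hn => h n hn (sub_add_cancel _ _).symm, fun h k hk hkn => h ?_⟩
  rw [sub_add_cancel, Nat.cast_inj] at hkn
  exact hkn ▸ hk

theorem neg_one_notMem_associatedSet (h0 : 0 ∈ H) : -1 ∉ associatedSet H :=
  fun h => h 0 h0 (by norm_num)

theorem associatedSet_inter_Ici_natCast_sub_one (a : ℕ) :
    associatedSet H ∩ Ici ((a : ℤ) - 1) =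
      (fun n : ℕ => (n : ℤ) - 1) '' (Hᶜ ∩ Ici a) := by
  ext m
  constructor
  · rintro ⟨hm, ham : (a : ℤ) - 1 ≤ m⟩
    obtain ⟨n, rfl⟩ : ∃ n : ℕ, m = n - 1 := ⟨(m + 1).toNat, by omega⟩
    exact ⟨n, ⟨natCast_sub_one_mem_associatedSet.1 hm, by simpa using ham⟩, rfl⟩
  · rintro ⟨n, ⟨hn, han⟩, rfl⟩
    exact ⟨natCast_sub_one_mem_associatedSet.2 hn, by simpa using han⟩

theorem ncard_associatedSet_inter_Ici_natCast_sub_one (a : ℕ) :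
    (associatedSet H ∩ Ici ((a : ℤ) - 1)).ncard = (Hᶜ ∩ Ici a).ncard := by
  have hinj : Function.Injective fun n : ℕ => (n : ℤ) - 1 := fun x y h => by simpa using h
  rw [associatedSet_inter_Ici_natCast_sub_one, ncard_image_of_injective _ hinj]

theorem associatedSet_inter_Ici_neg_one :
    associatedSet H ∩ Ici (-1) = (fun n : ℕ => (n : ℤ) - 1) '' Hᶜ := by
  simpa using associatedSet_inter_Ici_natCast_sub_one (H := H) 0

theorem ncard_associatedSet_inter_Ici_of_le_neg_one (hfin : Hᶜ.Finite) {c : ℤ} (hc : c ≤ -1) :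
    (associatedSet H ∩ Ici c).ncard = (-1 - c).toNat + Hᶜ.ncard := by
  have hsplit : associatedSet H ∩ Ici c = Ico c (-1) ∪ associatedSet H ∩ Ici (-1) := by
    ext m
    simp only [mem_union, mem_inter_iff, mem_Ico, mem_Ici]
    constructor
    · rintro ⟨hm, hcm⟩
      by_cases h : m < -1
      · exact .inl ⟨hcm, h⟩
      · exact .inr ⟨hm, by omega⟩
    · rintro (⟨hcm, hm⟩ | ⟨hm, hm'⟩)
      · exact ⟨fun n _ => by omega, hcm⟩
      · exact ⟨hm, by omega⟩
  have hdisj : Disjoint (Ico c (-1)) (associatedSet H ∩ Ici (-1)) :=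
    disjoint_left.2 fun _ hm hm' => not_le.2 hm.2 hm'.2
  have hfin' : (associatedSet H ∩ Ici (-1)).Finite :=
    associatedSet_inter_Ici_neg_one ▸ hfin.image _
  have hcount : (associatedSet H ∩ Ici (-1)).ncard = Hᶜ.ncard := by
    simpa using ncard_associatedSet_inter_Ici_natCast_sub_one (H := H) 0
  rw [hsplit, ncard_union_eq hdisj (finite_Ico c (-1)) hfin', hcount, ← Finset.coe_Ico,
    ncard_coe_finset, Int.card_Ico]

end associatedSet

/-- Lemma 3.4: Let `H` be a numerical semigroup of genus `g` and let
`s 1 > s 2 > ⋯` be its associated sequence (the strictly decreasing enumeration of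
`{m : ℤ | m + 1 ∉ ℤ \ H}` where `ℤ \ H` means integers not lying in `H`).
Then `s i ≤ 2 g - 2 i` for `1 ≤ i ≤ g`, and `s i = g - i - 1` for `i ≥ g + 1`. -/
theorem associated_sequence_bound (g : ℕ) (H : Set ℕ) (s : ℕ → ℤ)
    (h0 : 0 ∈ H) (hadd : ∀ x ∈ H, ∀ y ∈ H, x + y ∈ H)
    (hfin : {n : ℕ | n ∉ H}.Finite) (hcard : {n : ℕ | n ∉ H}.ncard = g)
    (hsanti : ∀ i j, 1 ≤ i → i < j → s j < s i)
    (hsrange : ∀ m : ℤ, (∃ i, 1 ≤ i ∧ s i = m) ↔ ∀ n ∈ H, (n : ℤ) ≠ m + 1) :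
    (∀ i, 1 ≤ i → i ≤ g → s i ≤ 2 * (g : ℤ) - 2 * (i : ℤ)) ∧
    (∀ i, g + 1 ≤ i → s i = (g : ℤ) - (i : ℤ) - 1) := by
  replace hcard : Hᶜ.ncard = g := hcard
  have hs : StrictAntiOn s (Ici 1) := fun i hi j _ hij => hsanti i j hi hij
  have hT : associatedSet H = s '' Ici 1 := ext fun m => (hsrange m).symm
  have hcount : ∀ i, 1 ≤ i → (associatedSet H ∩ Ici (s i)).ncard = i := fun i hi =>
    hT ▸ ncard_image_Ici_one_inter_Ici hs hi
  have hneg : ∀ i, 1 ≤ i → s i ≤ -1 → s i = g - i - 1 := by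
    intro i hi hsi
    have hN := ncard_associatedSet_inter_Ici_of_le_neg_one hfin hsi
    rw [hcount i hi, hcard] at hN
    omega
  have hnonneg : ∀ i, 1 ≤ i → 0 ≤ s i → i ≤ g ∧ s i ≤ 2 * g - 2 * i := by
    intro i hi hsi
    obtain ⟨a, ha⟩ : ∃ a : ℕ, s i = a - 1 := ⟨(s i + 1).toNat, by omega⟩
    have haH : a ∉ H := natCast_sub_one_mem_associatedSet.1 (hT ▸ ha ▸ ⟨i, hi, rfl⟩)
    have hP := ncard_associatedSet_inter_Ici_natCast_sub_one (H := H) a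
    rw [← ha, hcount i hi] at hP
    have hsplit := ncard_inter_add_ncard_sdiff_eq_ncard Hᶜ (Iio a) hfin
    rw [Set.sdiff_eq, compl_Iio, ← hP, hcard] at hsplit
    have hgap := sub_one_le_two_mul_ncard_compl_inter_Iio hadd haH
    omega
  have hne : ∀ i, 1 ≤ i → s i ≠ -1 := fun i hi h =>
    neg_one_notMem_associatedSet h0 (h ▸ hT ▸ ⟨i, hi, rfl⟩)
  refine ⟨fun i hi hig => ?_, fun i hi => ?_⟩
  · rcases le_or_gt 0 (s i) with hsi | hsi
    · exact (hnonneg i hi hsi).2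
    · have := hneg i hi (by omega)
      have := hne i hi
      omega
  · rcases le_or_gt 0 (s i) with hsi | hsi
    · have := (hnonneg i (by omega) hsi).1
      omega
    · exact hneg i (by omega) (by omega)
end

section
/- (Combinatorial content of the Proposition of Section 3) Let g ≥ 0 and let (s_i)_{i ≥ 1} be any sequence of integers. There exists a numerical semigroup H′ of genus g whose associated sequence (s′_i) satisfies s′_i ≥ s_i for all i ≥ 1 if and only if s_i ≤ 2g − 2i for all 1 ≤ i ≤ g and s_i ≤ g − i − 1 for all i ≥ g + 1. -/
lemma pairing_lemma (H' : Set ℕ)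
    (hadd : ∀ x ∈ H', ∀ y ∈ H', x + y ∈ H')
    (hfin : {n : ℕ | n ∉ H'}.Finite) (ℓ : ℕ) (hℓ : ℓ ∉ H') :
    ℓ + 1 ≤ 2 * (hfin.toFinset.filter (· ≤ ℓ)).card := by
  classical
  set T := hfin.toFinset with hT
  set G := T.filter (· ≤ ℓ) with hG
  set f : ℕ → ℕ := fun x => if x ∈ H' then ℓ - x else x with hf
  have hmap : ∀ x ∈ Finset.range (ℓ + 1), f x ∈ G := by
    intro x hx
    simp only [Finset.mem_range] at hx
    have hxle : x ≤ ℓ := Nat.lt_succ_iff.mp hx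
    simp only [hf]
    split_ifs with hxin
    · have : ℓ - x ∉ H' := by
        intro hmem
        have := hadd x hxin (ℓ - x) hmem
        rw [Nat.add_sub_cancel' hxle] at this
        exact hℓ this
      simp only [hG, Finset.mem_filter, hT, Set.Finite.mem_toFinset, Set.mem_setOf_eq]
      exact ⟨this, Nat.sub_le _ _⟩
    · simp only [hG, Finset.mem_filter, hT, Set.Finite.mem_toFinset, Set.mem_setOf_eq]
      exact ⟨hxin, hxle⟩
  have himg : (Finset.range (ℓ + 1)).image f ⊆ G := by
    intro a ha
    obtain ⟨x, hx, rfl⟩ := Finset.mem_image.mp ha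
    exact hmap x hx
  have hcard : (Finset.range (ℓ + 1)).card ≤ 2 * ((Finset.range (ℓ + 1)).image f).card := by
    apply Finset.card_le_mul_card_image
    intro a _
    have : (Finset.range (ℓ + 1)).filter (fun x => f x = a) ⊆ {a, ℓ - a} := by
      intro x hx
      simp only [Finset.mem_filter, Finset.mem_range] at hx
      obtain ⟨hxr, hxf⟩ := hx
      simp only [hf] at hxf
      simp only [Finset.mem_insert, Finset.mem_singleton]
      split_ifs at hxf with hxin
      · right; omega
      · left; exact hxf
    calc ((Finset.range (ℓ + 1)).filter (fun x => f x = a)).card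
        ≤ ({a, ℓ - a} : Finset ℕ).card := Finset.card_le_card this
      _ ≤ 2 := Finset.card_insert_le _ _ |>.trans (by simp)
  rw [Finset.card_range] at hcard
  exact hcard.trans (Nat.mul_le_mul_left 2 (Finset.card_le_card himg))

lemma aux_forward (g : ℕ) (s : ℕ → ℤ)
    (H' : Set ℕ) (s' : ℕ → ℤ) (h0 : 0 ∈ H')
    (hadd : ∀ x ∈ H', ∀ y ∈ H', x + y ∈ H')
    (hfin : {n : ℕ | n ∉ H'}.Finite) (hg : {n : ℕ | n ∉ H'}.ncard = g)
    (hanti : ∀ i j, 1 ≤ i → i < j → s' j < s' i)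
    (hmem : ∀ m : ℤ, (∃ i, 1 ≤ i ∧ s' i = m) ↔ ∀ n ∈ H', (n : ℤ) ≠ m + 1)
    (hdom : ∀ i, 1 ≤ i → s i ≤ s' i) :
    ((∀ i, 1 ≤ i → i ≤ g → s i ≤ 2 * (g : ℤ) - 2 * (i : ℤ)) ∧
     (∀ i, g + 1 ≤ i → s i ≤ (g : ℤ) - (i : ℤ) - 1)) := by
  classical
  set T := hfin.toFinset with hT
  have hTcard : T.card = g := by
    rw [← hg, ← hfin.coe_toFinset, Set.ncard_coe_finset]
  have hforb : ∀ j, 1 ≤ j → ∀ n ∈ H', (n : ℤ) ≠ s' j + 1 :=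
    fun j hj => (hmem (s' j)).mp ⟨j, hj, rfl⟩
  have hgapT : ∀ j, 1 ≤ j → 0 ≤ s' j + 1 → (s' j + 1).toNat ∈ T := by
    intro j hj hpos
    simp only [hT, Set.Finite.mem_toFinset, Set.mem_setOf_eq]
    intro hin
    exact hforb j hj _ hin (by omega)
  have hmono : ∀ j i, 1 ≤ j → j ≤ i → s' i ≤ s' j := by
    intro j i hj hji
    rcases eq_or_lt_of_le hji with rfl | h
    · exact le_refl _
    · exact (hanti j i hj h).le
  constructor
  · -- case 1 ≤ i ≤ g
    intro i hi hig
    refine (hdom i hi).trans ?_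
    set m := s' i with hm
    rcases le_or_gt m (-1) with hneg | hpos
    · have : (i:ℤ) ≤ g := by exact_mod_cast hig
      omega
    · -- m ≥ 0
      have hm0 : 0 ≤ m := by omega
      set ℓ : ℕ := (m + 1).toNat with hℓdef
      have hℓcast : (ℓ : ℤ) = m + 1 := Int.toNat_of_nonneg (by omega)
      have hℓT : ℓ ∈ T := hgapT i hi (by omega)
      have hℓH : ℓ ∉ H' := by
        simpa [hT, Set.Finite.mem_toFinset] using hℓT
      have hpair := pairing_lemma H' hadd hfin ℓ hℓH
      rw [← hT] at hpair
      -- count gaps > ℓ : at least i - 1 of them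
      have hbig : i - 1 ≤ (T.filter (fun n => ℓ < n)).card := by
        have hinj : Set.InjOn (fun j => (s' j + 1).toNat) (Finset.Icc 1 (i-1)) := by
          intro a ha b hb hab
          simp only [Finset.coe_Icc, Set.mem_Icc] at ha hb
          dsimp only at hab
          have hsa : m < s' a := hanti a i ha.1 (by omega)
          have hsb : m < s' b := hanti b i hb.1 (by omega)
          by_contra hne
          rcases lt_or_gt_of_ne hne with h | h
          · have := hanti a b ha.1 h; omega
          · have := hanti b a hb.1 h; omega
        have hmapsto : ∀ j ∈ Finset.Icc 1 (i-1),
            (s' j + 1).toNat ∈ T.filter (fun n => ℓ < n) := by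
          intro j hj
          simp only [Finset.mem_Icc] at hj
          have hsj : m < s' j := hanti j i hj.1 (by omega)
          simp only [Finset.mem_filter]
          refine ⟨hgapT j hj.1 (by omega), ?_⟩
          omega
        calc i - 1 = (Finset.Icc 1 (i-1)).card := by rw [Nat.card_Icc]; omega
          _ ≤ _ := Finset.card_le_card_of_injOn _ hmapsto hinj
      have hsplit : (T.filter (· ≤ ℓ)).card + (T.filter (fun n => ℓ < n)).card = T.card := by
        have h := Finset.card_filter_add_card_filter_not (s := T) (p := (· ≤ ℓ))
        simpa [Nat.not_le] using h
      have hig' : (i:ℤ) ≤ g := by exact_mod_cast hig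
      omega
  · -- case i ≥ g + 1
    intro i hig
    have hi : 1 ≤ i := by omega
    refine (hdom i hi).trans ?_
    set m := s' i with hm
    set F : Finset ℤ := (T.image (fun n : ℕ => (n:ℤ) - 1)) ∪ Finset.Icc m (-2) with hF
    have hinj : Set.InjOn s' (Finset.Icc 1 i) := by
      intro a ha b hb hab
      simp only [Finset.coe_Icc, Set.mem_Icc] at ha hb
      by_contra hne
      rcases lt_or_gt_of_ne hne with h | h
      · have := hanti a b ha.1 h; omega
      · have := hanti b a hb.1 h; omega
    have hmapsto : ∀ j ∈ Finset.Icc 1 i, s' j ∈ F := by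
      intro j hj
      simp only [Finset.mem_Icc] at hj
      have hge : m ≤ s' j := hmono j i hj.1 hj.2
      rcases le_or_gt (s' j) (-2) with hc | hc
      · exact Finset.mem_union_right _ (Finset.mem_Icc.mpr ⟨hge, hc⟩)
      · apply Finset.mem_union_left
        apply Finset.mem_image.mpr
        refine ⟨(s' j + 1).toNat, hgapT j hj.1 (by omega), by omega⟩
    have hcard : i ≤ F.card := by
      calc i = (Finset.Icc 1 i).card := by rw [Nat.card_Icc]; omega
        _ ≤ F.card := Finset.card_le_card_of_injOn _ hmapsto hinj
    have hFcard : F.card ≤ g + (-1 - m).toNat := by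
      refine (Finset.card_union_le _ _).trans ?_
      have h1 : (T.image (fun n : ℕ => (n:ℤ) - 1)).card ≤ g :=
        hTcard ▸ Finset.card_image_le
      have h2 : (Finset.Icc m (-2)).card = (-1 - m).toNat := by
        rw [Int.card_Icc]; omega
      omega
    have hfin2 : i ≤ g + (-1 - m).toNat := hcard.trans hFcard
    omega

lemma aux_reverse (g : ℕ) (s : ℕ → ℤ)
    (h1 : ∀ i, 1 ≤ i → i ≤ g → s i ≤ 2 * (g : ℤ) - 2 * (i : ℤ))
    (h2 : ∀ i, g + 1 ≤ i → s i ≤ (g : ℤ) - (i : ℤ) - 1) :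
    (∃ H' : Set ℕ, ∃ s' : ℕ → ℤ,
      0 ∈ H' ∧ (∀ x ∈ H', ∀ y ∈ H', x + y ∈ H') ∧
      {n : ℕ | n ∉ H'}.Finite ∧ {n : ℕ | n ∉ H'}.ncard = g ∧
      (∀ i j, 1 ≤ i → i < j → s' j < s' i) ∧
      (∀ m : ℤ, (∃ i, 1 ≤ i ∧ s' i = m) ↔ ∀ n ∈ H', (n : ℤ) ≠ m + 1) ∧
      (∀ i, 1 ≤ i → s i ≤ s' i)) := by
  classical
  refine ⟨{n | Even n ∨ 2 * g + 1 ≤ n},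
    fun i => if i ≤ g then 2 * (g:ℤ) - 2 * i else (g:ℤ) - i - 1,
    ?_, ?_, ?_, ?_, ?_, ?_, ?_⟩
  · exact Or.inl Even.zero
  · rintro x (hx | hx) y (hy | hy)
    · exact Or.inl (hx.add hy)
    · exact Or.inr (by omega)
    · exact Or.inr (by omega)
    · exact Or.inr (by omega)
  · apply Set.Finite.subset (Set.finite_Iio (2 * g + 1))
    intro n hn
    simp only [Set.mem_setOf_eq, not_or, not_le] at hn
    exact hn.2
  · have hset : {n : ℕ | n ∉ {n : ℕ | Even n ∨ 2 * g + 1 ≤ n}} =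
        ↑((Finset.range g).image (fun k => 2 * k + 1)) := by
      ext n
      simp only [Set.mem_setOf_eq, not_or, not_le, Finset.coe_image, Finset.coe_range,
        Set.mem_image, Set.mem_Iio, Nat.not_even_iff_odd]
      constructor
      · rintro ⟨⟨k, rfl⟩, hlt⟩
        exact ⟨k, by omega, rfl⟩
      · rintro ⟨k, hk, rfl⟩
        exact ⟨⟨k, rfl⟩, by omega⟩
    rw [hset, Set.ncard_coe_finset,
      Finset.card_image_of_injective _ (fun a b hab => by omega), Finset.card_range]
  · intro i j hi hij
    dsimp only
    split_ifs with h1' h2' h2' <;> push_cast <;> omega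
  · intro m
    constructor
    · rintro ⟨i, hi, rfl⟩
      intro n hn
      dsimp only
      split_ifs with h
      · rcases hn with hn | hn
        · obtain ⟨k, rfl⟩ := hn
          intro hc
          omega
        · intro hc
          omega
      · intro hc
        omega
    · intro hall
      rcases le_or_gt (m + 1) 0 with hneg | hpos
      · have hm2 : m ≤ -2 := by
          rcases eq_or_lt_of_le hneg with he | hl
          · exfalso
            exact hall 0 (Or.inl Even.zero) (by omega)
          · omega
        refine ⟨g + (-m - 1).toNat, by omega, ?_⟩
        dsimp only
        rw [if_neg (by omega)]
        push_cast
        omega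
      · -- m + 1 ≥ 1 : it's a natural number gap
        set n : ℕ := (m + 1).toNat with hn
        have hncast : (n : ℤ) = m + 1 := Int.toNat_of_nonneg (by omega)
        have hnH : ¬ (Even n ∨ 2 * g + 1 ≤ n) := fun h => hall n h (by omega)
        push_neg at hnH
        obtain ⟨hodd, hlt⟩ := hnH
        rw [Nat.not_even_iff_odd] at hodd
        obtain ⟨k, hk⟩ := hodd
        -- n = 2k+1, k ≤ g - 1, m = 2k, choose i = g - k
        refine ⟨g - k, by omega, ?_⟩
        dsimp only
        rw [if_pos (by omega)]
        have : (↑(g - k) : ℤ) = (g:ℤ) - k := by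
          push_cast [Nat.cast_sub (by omega : k ≤ g)]; ring
        omega
  · intro i hi
    dsimp only
    split_ifs with h
    · exact h1 i hi h
    · exact h2 i (by omega)



/-- Let `g ≥ 0` and let `(s i)` (for `i ≥ 1`) be any sequence of integers.
There exists a numerical semigroup `H'` of genus `g` whose associated sequence `(s' i)`
(the strictly decreasing enumeration of `{m : ℤ | m + 1 ∉ H'}`) satisfies `s' i ≥ s i`
for all `i ≥ 1` if and only if `s i ≤ 2g − 2i` for all `1 ≤ i ≤ g` and
`s i ≤ g − i − 1` for all `i ≥ g + 1`. -/
theorem exists_dominating_weierstrass_sequence_iff (g : ℕ) (s : ℕ → ℤ) :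
    (∃ H' : Set ℕ, ∃ s' : ℕ → ℤ,
      0 ∈ H' ∧ (∀ x ∈ H', ∀ y ∈ H', x + y ∈ H') ∧
      {n : ℕ | n ∉ H'}.Finite ∧ {n : ℕ | n ∉ H'}.ncard = g ∧
      (∀ i j, 1 ≤ i → i < j → s' j < s' i) ∧
      (∀ m : ℤ, (∃ i, 1 ≤ i ∧ s' i = m) ↔ ∀ n ∈ H', (n : ℤ) ≠ m + 1) ∧
      (∀ i, 1 ≤ i → s i ≤ s' i)) ↔
    ((∀ i, 1 ≤ i → i ≤ g → s i ≤ 2 * (g : ℤ) - 2 * (i : ℤ)) ∧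
     (∀ i, g + 1 ≤ i → s i ≤ (g : ℤ) - (i : ℤ) - 1)) := by
  constructor
  · rintro ⟨H', s', h0, hadd, hfin, hg, hanti, hmem, hdom⟩
    exact aux_forward g s H' s' h0 hadd hfin hg hanti hmem hdom
  · rintro ⟨h1, h2⟩
    exact aux_reverse g s h1 h2
end

section
/- (Jacobi–Trudi identity for the classes k*Ω_μ^T) Let g ≥ 1 and let μ = (μ_1 ≥ μ_2 ≥ ⋯ ≥ μ_g ≥ 0) be a partition with at most g parts. In the polynomial ring ℚ[x_1, …, x_g, ψ] the following determinant identity holds: det[ A_{ij} ]_{1≤i,j≤g} = (Π_{1≤i<j≤g} (x_i − x_j)) · det[ B_{ij} ]_{1≤i,j≤g}, where A_{ij} = Π_{m=0}^{μ_j + g − j − 1} (x_i + mψ) (an empty product, occurring exactly when μ_j + g − j = 0, equals 1), and B_{ij} = Σ_{a+b = μ_i + j − i, a,b ≥ 0} h_a(x_1, …, x_g) · e_b(0, 1, …, μ_i − i + g − 1) · ψ^b, the sum being empty (so B_{ij} = 0) when μ_i + j − i < 0. -/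
open Finset

/-- The complete homogeneous symmetric polynomial `h_a(x 1, …, x g)` of degree `a`. -/
def completeHomog {R : Type*} [CommRing R] {g : ℕ} (x : Fin g → R) (a : ℕ) : R :=
  ∑ m ∈ (Finset.univ : Finset (Fin g)).sym a, ((m : Multiset (Fin g)).map x).prod

/-- The elementary symmetric polynomial `e_b(0, 1, …, N − 1)` of degree `b` evaluated at
the first `N` nonnegative integers (so `e_b(0,1,…,N)` in the paper is `elemNat (N+1) b`);
it equals `1` when `b = 0` and `0` when `b > N`. -/
def elemNat {R : Type*} [CommRing R] (N b : ℕ) : R :=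
  ∑ t ∈ (Finset.range N).powersetCard b, ∏ m ∈ t, (m : R)

/-! Write `Nᵢ = μᵢ + g - 1 - i` (indices from `0`), `H(t) = ∏ₖ 1 / (1 - xₖ t) = ∑ₐ hₐ(x) tᵃ` and
`Fᵢ(t) = ∏_{m < Nᵢ} (1 + m ψ t) = ∑_b e_b(0, …, Nᵢ - 1) ψᵇ tᵇ`, so that `Bᵢⱼ` is the coefficient
of `t^(Nᵢ - (g - 1 - j))` in `Fᵢ H`. If `Mⱼₗ` is the coefficient of `t^(g - 1 - j)` in
`Pₗ(t) = ∏_{m ≠ l} (1 - x_m t)`, a polynomial of degree `< g`, then `(B M)ᵢₗ` is the coefficient of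
`t^Nᵢ` in `Fᵢ H Pₗ = Fᵢ / (1 - xₗ t)`, namely `∏_{m < Nᵢ} (xₗ + m ψ) = Aₗᵢ`. Hence `Aᵀ = B M`, and
`det M = ∏_{i < j} (xᵢ - xⱼ)` because `V M` is diagonal with entries `∏_{m ≠ l} (xₗ - x_m)` for the
Vandermonde matrix `V`. -/

open PowerSeries

namespace PowerSeries

variable {R : Type*} [CommRing R]

theorem one_sub_C_mul_X_mul_mk_pow (r : R) : (1 - C r * X) * mk (r ^ ·) = 1 := by
  have h := congrArg (rescale r) (mk_one_mul_one_sub_eq_one R)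
  rw [map_mul, map_sub, map_one, rescale_X, rescale_mk, mul_comm] at h
  simpa using h

theorem coeff_prod_one_add_C_mul_X {ι : Type*} (s : Finset ι) (f : ι → R) (k : ℕ) :
    coeff k (∏ i ∈ s, (1 + C (f i) * X)) = ∑ t ∈ s.powersetCard k, ∏ i ∈ t, f i := by
  classical
  simp_rw [prod_one_add, prod_mul_distrib, ← map_prod, prod_const, map_sum, coeff_C_mul_X_pow,
    powersetCard_eq_filter, sum_filter, eq_comm (a := k)]

theorem coeff_prod_one_add_C_mul_X_eq_zero {ι : Type*} (s : Finset ι) (f : ι → R) {k : ℕ}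
    (hk : #s < k) : coeff k (∏ i ∈ s, (1 + C (f i) * X)) = 0 := by
  rw [coeff_prod_one_add_C_mul_X, powersetCard_eq_empty.mpr hk, sum_empty]

theorem coeff_card_add_prod_one_add_C_mul_X_mul_mk_pow {ι : Type*} [DecidableEq ι]
    (s : Finset ι) (f : ι → R) (y : R) (r : ℕ) :
    coeff (#s + r) ((∏ i ∈ s, (1 + C (f i) * X)) * mk (y ^ ·))
      = (∏ i ∈ s, (y + f i)) * y ^ r := by
  induction s using Finset.induction_on generalizing r with
  | empty => simp
  | insert a s ha ih =>
    set Q := (∏ i ∈ s, (1 + C (f i) * X)) * mk (y ^ ·)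
    have hQ : (1 + C (f a) * X) * (∏ i ∈ s, (1 + C (f i) * X)) * mk (y ^ ·)
        = Q + C (f a) * (X * Q) := by ring
    rw [prod_insert ha, prod_insert ha, card_insert_of_notMem ha, hQ, map_add, coeff_C_mul,
      add_right_comm, coeff_succ_X_mul, ih r, add_assoc, ih (r + 1)]
    ring

theorem coeff_prod_mk_pow {g : ℕ} (x : Fin g → R) (a : ℕ) :
    coeff a (∏ i, mk (x i ^ ·)) = completeHomog x a := by
  classical
  rw [coeff_prod, completeHomog]
  simp only [coeff_mk]
  refine (sum_bij (fun (m : Sym (Fin g) a) _ => Multiset.toFinsupp (m : Multiset (Fin g)))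
    ?_ ?_ ?_ ?_).symm
  · intro m _
    exact mem_finsuppAntidiag.mpr
      ⟨(Multiset.sum_count_eq_card fun i _ => mem_univ i).trans m.2, subset_univ _⟩
  · intro m₁ _ m₂ _ h
    exact Sym.coe_injective (Multiset.toFinsupp.injective h)
  · intro l hl
    have hcard : Multiset.card (Finsupp.toMultiset l) = a := by
      simpa [Finsupp.card_toMultiset, Finsupp.sum_fintype, mem_finsuppAntidiag] using hl
    exact ⟨⟨_, hcard⟩, mem_sym_iff.mpr fun i _ => mem_univ i, Finsupp.toMultiset_toFinsupp l⟩
  · intro m _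
    rw [prod_multiset_map_count]
    exact prod_subset (subset_univ _) fun i _ hi => by
      rw [Multiset.count_eq_zero.mpr fun hmem => hi (Multiset.mem_toFinset.mpr hmem), pow_zero]

theorem coeff_mul_eq_sum_fin_of_coeff_eq_zero {g : ℕ} (G P : R⟦X⟧)
    (hP : ∀ k, g ≤ k → coeff k P = 0) (d e : ℕ) (he : e < g) :
    coeff (d + (g - (e + 1))) (G * P)
      = ∑ j : Fin g, (if e ≤ d + j then coeff (d + j - e) G else 0) * coeff (g - 1 - j) P := by
  set T := d + (g - (e + 1))
  set f : ℕ → R := fun b => (if b ≤ T then coeff (T - b) G else 0) * coeff b P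
  have hf : ∀ b, b ∉ range (min g (T + 1)) → f b = 0 := by
    intro b hb
    rw [mem_range, lt_min_iff, not_and_or, not_lt, not_lt] at hb
    dsimp only [f]
    rcases hb with hgb | hbT
    · rw [hP b hgb, mul_zero]
    · rw [if_neg (by omega), zero_mul]
  calc coeff T (G * P)
      = ∑ b ∈ range (T + 1), f b := by
        rw [mul_comm, coeff_mul,
          Nat.sum_antidiagonal_eq_sum_range_succ fun i j => coeff i P * coeff j G]
        refine sum_congr rfl fun b hb => ?_
        dsimp only [f]
        rw [if_pos (Nat.lt_succ_iff.mp (mem_range.mp hb)), mul_comm]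
    _ = ∑ b ∈ range g, f b := by
        rw [← sum_subset (range_mono (min_le_right g (T + 1))) fun b _ hb => hf b hb,
          sum_subset (range_mono (min_le_left g (T + 1))) fun b _ hb => hf b hb]
    _ = ∑ j ∈ range g, f (g - 1 - j) := (sum_range_reflect f g).symm
    _ = _ := by
        rw [← Fin.sum_univ_eq_sum_range]
        refine sum_congr rfl fun j _ => ?_
        have hj := j.isLt
        dsimp only [f]
        by_cases h : e ≤ d + j
        · rw [if_pos h, if_pos (by omega), show T - (g - 1 - j) = d + j - e by omega]
        · rw [if_neg h, if_neg (by omega)]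

end PowerSeries

theorem prod_filter_fst_lt_snd {α M : Type*} [Fintype α] [LinearOrder α]
    [LocallyFiniteOrderTop α] [CommMonoid M] (f : α → α → M) :
    ∏ p ∈ univ.filter (fun p : α × α => p.1 < p.2), f p.1 p.2 = ∏ i, ∏ j ∈ Ioi i, f i j := by
  rw [prod_filter, Fintype.prod_prod_type]
  refine prod_congr rfl fun i _ => ?_
  rw [← prod_filter, filter_lt_eq_Ioi]

section Lagrange

variable {R : Type*} [CommRing R] {g : ℕ} (x : Fin g → R)

/-- The reversal of the Lagrange nodal polynomial `∏_{m ≠ l} (t - x_m)`, so that column `l` of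
`lagrangeMatrix x` lists the coefficients of the nodal polynomial itself. -/
noncomputable def lagrangeSeries (l : Fin g) : R⟦X⟧ :=
  ∏ m ∈ univ.erase l, (1 - C (x m) * X)

noncomputable def lagrangeMatrix : Matrix (Fin g) (Fin g) R :=
  Matrix.of fun j l => coeff (g - 1 - j) (lagrangeSeries x l)

theorem lagrangeSeries_eq_prod_one_add (l : Fin g) :
    lagrangeSeries x l = ∏ m ∈ univ.erase l, (1 + C (-x m) * X) := by
  simp only [lagrangeSeries, map_neg, neg_mul, ← sub_eq_add_neg]

theorem coeff_lagrangeSeries_eq_zero (l : Fin g) {k : ℕ} (hk : g ≤ k) :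
    coeff k (lagrangeSeries x l) = 0 := by
  have hl := l.pos
  rw [lagrangeSeries_eq_prod_one_add]
  refine coeff_prod_one_add_C_mul_X_eq_zero _ _ ?_
  rw [card_erase_of_mem (mem_univ l), card_univ, Fintype.card_fin]
  omega

theorem coeff_lagrangeSeries_mul_mk_pow (l : Fin g) (y : R) :
    coeff (g - 1) (lagrangeSeries x l * PowerSeries.mk (y ^ ·))
      = ∏ m ∈ univ.erase l, (y - x m) := by
  have h := coeff_card_add_prod_one_add_C_mul_X_mul_mk_pow (univ.erase l) (fun m => -x m) y 0
  rw [lagrangeSeries_eq_prod_one_add]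
  simpa [← sub_eq_add_neg] using h

theorem prod_mk_pow_mul_lagrangeSeries (l : Fin g) :
    (∏ i, PowerSeries.mk (x i ^ ·)) * lagrangeSeries x l = PowerSeries.mk (x l ^ ·) := by
  have hinv : (∏ i, PowerSeries.mk (x i ^ ·)) * ∏ i, (1 - C (x i) * X) = (1 : R⟦X⟧) := by
    rw [← prod_mul_distrib]
    exact prod_eq_one fun i _ => (mul_comm _ _).trans (one_sub_C_mul_X_mul_mk_pow (x i))
  calc (∏ i, PowerSeries.mk (x i ^ ·)) * lagrangeSeries x l
      = (∏ i, PowerSeries.mk (x i ^ ·)) * lagrangeSeries x l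
          * ((1 - C (x l) * X) * PowerSeries.mk (x l ^ ·)) := by
        rw [one_sub_C_mul_X_mul_mk_pow, mul_one]
    _ = (∏ i, PowerSeries.mk (x i ^ ·)) * (∏ i, (1 - C (x i) * X))
          * PowerSeries.mk (x l ^ ·) := by
        rw [← mul_prod_erase univ (fun i => 1 - C (x i) * X) (mem_univ l), lagrangeSeries]
        ring
    _ = PowerSeries.mk (x l ^ ·) := by rw [hinv, one_mul]

theorem vandermonde_mul_lagrangeMatrix :
    Matrix.vandermonde x * lagrangeMatrix x
      = Matrix.diagonal fun l => ∏ m ∈ univ.erase l, (x l - x m) := by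
  ext k l
  have hg : 0 < g := k.pos
  have h := coeff_mul_eq_sum_fin_of_coeff_eq_zero (PowerSeries.mk (x k ^ ·)) (lagrangeSeries x l)
    (fun _ => coeff_lagrangeSeries_eq_zero x l) 0 0 hg
  simp only [zero_add, Nat.zero_le, if_true, Nat.sub_zero, coeff_mk] at h
  rw [Matrix.mul_apply, Matrix.diagonal_apply]
  simp only [Matrix.vandermonde_apply, lagrangeMatrix, Matrix.of_apply]
  rw [← h, mul_comm, coeff_lagrangeSeries_mul_mk_pow]
  split_ifs with hkl
  · rw [hkl]
  · exact prod_eq_zero (mem_erase.mpr ⟨hkl, mem_univ k⟩) (sub_self _)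

theorem prod_prod_erase_sub :
    ∏ l, ∏ m ∈ univ.erase l, (x l - x m)
      = (Matrix.vandermonde x).det * ∏ i, ∏ j ∈ Ioi i, (x i - x j) := by
  have herase (l : Fin g) : univ.erase l = Iio l ∪ Ioi l := by
    ext m
    simp only [mem_erase, mem_univ, and_true, mem_union, mem_Iio, mem_Ioi]
    exact ne_iff_lt_or_gt
  simp_rw [herase, prod_union (disjoint_Ioi_Iio _).symm, prod_mul_distrib, Matrix.det_vandermonde]
  congr 1
  exact prod_comm' fun l m => by simp

theorem det_lagrangeMatrix [IsDomain R] (hx : Function.Injective x) :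
    (lagrangeMatrix x).det = ∏ i, ∏ j ∈ Ioi i, (x i - x j) := by
  refine mul_left_cancel₀ (Matrix.det_vandermonde_ne_zero_iff.mpr hx) ?_
  rw [← Matrix.det_mul, vandermonde_mul_lagrangeMatrix, Matrix.det_diagonal, prod_prod_erase_sub]

end Lagrange

section JacobiTrudi

variable {R : Type*} [CommRing R] {g : ℕ}

noncomputable def factorialSeries (ψ : R) (N : ℕ) : R⟦X⟧ :=
  ∏ m ∈ range N, (1 + C (m * ψ) * X)

theorem coeff_factorialSeries (ψ : R) (N b : ℕ) :
    coeff b (factorialSeries ψ N) = elemNat N b * ψ ^ b := by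
  rw [factorialSeries, coeff_prod_one_add_C_mul_X, elemNat, sum_mul]
  refine sum_congr rfl fun t ht => ?_
  rw [prod_mul_distrib, prod_const, (mem_powersetCard.mp ht).2]

theorem coeff_factorialSeries_mul_mk_pow (ψ y : R) (N : ℕ) :
    coeff N (factorialSeries ψ N * PowerSeries.mk (y ^ ·)) = ∏ m ∈ range N, (y + m * ψ) := by
  have h := coeff_card_add_prod_one_add_C_mul_X_mul_mk_pow (range N) (fun m => m * ψ) y 0
  rwa [card_range, add_zero, pow_zero, mul_one] at h

def factorialMatrix (x : Fin g → R) (ψ : R) (μ : Fin g → ℕ) : Matrix (Fin g) (Fin g) R :=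
  Matrix.of fun i j => ∏ m ∈ range (μ j + (g - (j + 1))), (x i + m * ψ)

def jacobiTrudiMatrix (x : Fin g → R) (ψ : R) (μ : Fin g → ℕ) : Matrix (Fin g) (Fin g) R :=
  Matrix.of fun i j =>
    if i.val ≤ μ i + j.val then
      ∑ p ∈ antidiagonal (μ i + j.val - i.val),
        completeHomog x p.1 * elemNat (μ i + (g - (i.val + 1))) p.2 * ψ ^ p.2
    else 0

theorem jacobiTrudiMatrix_apply (x : Fin g → R) (ψ : R) (μ : Fin g → ℕ) (i j : Fin g) :
    jacobiTrudiMatrix x ψ μ i j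
      = if i.val ≤ μ i + j.val then
          coeff (μ i + j.val - i.val)
            ((∏ k, PowerSeries.mk (x k ^ ·)) * factorialSeries ψ (μ i + (g - (i.val + 1))))
        else 0 := by
  simp only [jacobiTrudiMatrix, Matrix.of_apply, coeff_mul, coeff_prod_mk_pow,
    coeff_factorialSeries, mul_assoc]

theorem jacobiTrudiMatrix_mul_lagrangeMatrix (x : Fin g → R) (ψ : R) (μ : Fin g → ℕ) :
    jacobiTrudiMatrix x ψ μ * lagrangeMatrix x = (factorialMatrix x ψ μ).transpose := by
  ext i l
  simp only [Matrix.mul_apply, jacobiTrudiMatrix_apply, lagrangeMatrix, Matrix.of_apply]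
  rw [← coeff_mul_eq_sum_fin_of_coeff_eq_zero _ _ (fun _ => coeff_lagrangeSeries_eq_zero x l)
      _ _ i.isLt, mul_right_comm, prod_mk_pow_mul_lagrangeSeries, mul_comm,
    coeff_factorialSeries_mul_mk_pow]
  rfl

theorem det_factorialMatrix [IsDomain R] {x : Fin g → R} (hx : Function.Injective x) (ψ : R)
    (μ : Fin g → ℕ) :
    (factorialMatrix x ψ μ).det
      = (∏ i, ∏ j ∈ Ioi i, (x i - x j)) * (jacobiTrudiMatrix x ψ μ).det := by
  rw [← Matrix.det_transpose, ← jacobiTrudiMatrix_mul_lagrangeMatrix, Matrix.det_mul,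
    det_lagrangeMatrix x hx, mul_comm]

end JacobiTrudi

theorem jacobi_trudi_for_krichever_general (g : ℕ) (μ : Fin g → ℕ) :
    Matrix.det (Matrix.of fun i j : Fin g =>
        ∏ m ∈ Finset.range (μ j + (g - (j.val + 1))),
          ((MvPolynomial.X (some i) : MvPolynomial (Option (Fin g)) ℚ)
            + (m : MvPolynomial (Option (Fin g)) ℚ) * MvPolynomial.X none))
      = (∏ p ∈ (Finset.univ : Finset (Fin g × Fin g)).filter (fun p => p.1 < p.2),
          ((MvPolynomial.X (some p.1) : MvPolynomial (Option (Fin g)) ℚ)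
            - MvPolynomial.X (some p.2)))
        * Matrix.det (Matrix.of fun i j : Fin g =>
            if i.val ≤ μ i + j.val then
              ∑ p ∈ Finset.HasAntidiagonal.antidiagonal (μ i + j.val - i.val),
                completeHomog (fun k : Fin g =>
                    (MvPolynomial.X (some k) : MvPolynomial (Option (Fin g)) ℚ)) p.1
                  * elemNat (μ i + (g - (i.val + 1))) p.2
                  * (MvPolynomial.X none : MvPolynomial (Option (Fin g)) ℚ) ^ p.2
            else 0) := by
  have hx : Function.Injective fun i : Fin g =>
      (MvPolynomial.X (some i) : MvPolynomial (Option (Fin g)) ℚ) :=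
    MvPolynomial.X_injective.comp (Option.some_injective _)
  rw [prod_filter_fst_lt_snd fun i j : Fin g =>
    (MvPolynomial.X (some i) - MvPolynomial.X (some j) : MvPolynomial (Option (Fin g)) ℚ)]
  exact det_factorialMatrix hx _ μ

/-- Jacobi–Trudi identity for the classes `k*Ω_μ^T`: for a partition
`μ_1 ≥ ⋯ ≥ μ_g ≥ 0` with at most `g` parts, in `ℚ[x_1, …, x_g, ψ]` (realized as the
multivariate polynomial ring on `Option (Fin g)`, with `ψ = X none` and `x_i = X (some i)`):
`det A = Vandermonde(x) · det B`, where
`A i j = ∏_{m=0}^{μ_j+g−j−1} (x_i + m ψ)` and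
`B i j = ∑_{a+b=μ_i+j−i} h_a(x) e_b(0,1,…,μ_i−i+g−1) ψ^b` (indices `i, j` run over `1, …, g`,
and `B i j = 0` when `μ_i + j − i < 0`). -/
theorem jacobi_trudi_for_krichever (g : ℕ) (hg : 1 ≤ g) (μ : Fin g → ℕ)
    (hμ : ∀ i j : Fin g, i ≤ j → μ j ≤ μ i) :
    Matrix.det (Matrix.of fun i j : Fin g =>
        ∏ m ∈ Finset.range (μ j + (g - (j.val + 1))),
          ((MvPolynomial.X (some i) : MvPolynomial (Option (Fin g)) ℚ)
            + (m : MvPolynomial (Option (Fin g)) ℚ) * MvPolynomial.X none))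
      = (∏ p ∈ (Finset.univ : Finset (Fin g × Fin g)).filter (fun p => p.1 < p.2),
          ((MvPolynomial.X (some p.1) : MvPolynomial (Option (Fin g)) ℚ)
            - MvPolynomial.X (some p.2)))
        * Matrix.det (Matrix.of fun i j : Fin g =>
            if i.val ≤ μ i + j.val then
              ∑ p ∈ Finset.HasAntidiagonal.antidiagonal (μ i + j.val - i.val),
                completeHomog (fun k : Fin g =>
                    (MvPolynomial.X (some k) : MvPolynomial (Option (Fin g)) ℚ)) p.1
                  * elemNat (μ i + (g - (i.val + 1))) p.2
                  * (MvPolynomial.X none : MvPolynomial (Option (Fin g)) ℚ) ^ p.2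
            else 0) :=
  jacobi_trudi_for_krichever_general g μ
end
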